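/- arXiv:1407.7587 — 9 statements merged into one kernel-verified Lean document; each statement's English description precedes it below -/
import Mathlib

section
/- Suppose y(r) = Σ_{j=0}^{n} c_j r^j with c_n ≠ 0 is a polynomial solution of degree n of the differential equation (a₄₂ r² + a₄₃ r) y'' + (a₃₀ r³ + a₃₁ r² + a₃₂ r + a₃₃) y' − (τ₂₀ r² + τ₂₁ r + τ₂₂) y = 0, where a₃₀² + τ₂₀² ≠ 0. Then necessarily τ₂₀ = n a₃₀. -/
open Polynomial

lemma aux_coeff_zero (a : ℝ) (k : ℕ) (p : Polynomial ℝ) (m : ℕ)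
    (h : k + p.natDegree < m) : (C a * X ^ k * p).coeff m = 0 := by
  apply coeff_eq_zero_of_natDegree_lt
  calc (C a * X ^ k * p).natDegree ≤ (C a * X ^ k).natDegree + p.natDegree :=
        natDegree_mul_le
    _ ≤ k + p.natDegree := by
        gcongr
        calc (C a * X ^ k).natDegree ≤ (C a).natDegree + (X ^ k : Polynomial ℝ).natDegree :=
              natDegree_mul_le
          _ ≤ k := by simp
    _ < m := h

lemma aux_coeff_main (a : ℝ) (k d : ℕ) (p : Polynomial ℝ) :
    (C a * X ^ k * p).coeff (d + k) = a * p.coeff d := by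
  rw [mul_assoc, coeff_C_mul, coeff_X_pow_mul]

theorem stmt_3 (a42 a43 a30 a31 a32 a33 τ20 τ21 τ22 : ℝ) (n : ℕ)
    (y : Polynomial ℝ) (hy0 : y ≠ 0) (hdeg : y.natDegree = n)
    (hne : a30 ^ 2 + τ20 ^ 2 ≠ 0)
    (hODE : (C a42 * X ^ 2 + C a43 * X) * derivative (derivative y) +
        (C a30 * X ^ 3 + C a31 * X ^ 2 + C a32 * X + C a33) * derivative y -
        (C τ20 * X ^ 2 + C τ21 * X + C τ22) * y = 0) :
    τ20 = n * a30 := by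
  have hc0 : y.coeff n ≠ 0 := by
    rw [← hdeg]; exact mt leadingCoeff_eq_zero.mp hy0
  have hd' : (derivative y).natDegree ≤ n - 1 := by
    rw [← hdeg]; exact natDegree_derivative_le y
  have hd'' : (derivative (derivative y)).natDegree ≤ n - 1 :=
    le_trans (natDegree_derivative_le _) (by omega)
  cases n with
  | zero =>
    -- y is a nonzero constant
    obtain ⟨c, rfl⟩ := natDegree_eq_zero.mp hdeg
    have hcne : c ≠ 0 := by simpa using hc0
    have h := congrArg (fun p => p.coeff 2) hODE
    simp only [derivative_C, derivative_zero, mul_zero, zero_add, coeff_sub, coeff_zero] at h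
    have h2 : ((C τ20 * X ^ 2 + C τ21 * X + C τ22) * C c).coeff 2 = τ20 * c := by
      simp only [add_mul]
      rw [show ((2:ℕ)) = 0 + 2 from rfl]
      rw [coeff_add, coeff_add, aux_coeff_main]
      have e1 : (C τ21 * X * C c).coeff (0 + 2) = 0 := by
        rw [show C τ21 * X = C τ21 * X ^ 1 by ring]
        exact aux_coeff_zero _ _ _ _ (by simp)
      have e2 : (C τ22 * C c).coeff (0 + 2) = 0 := by
        rw [show C τ22 * C c = C τ22 * X ^ 0 * C c by ring]
        exact aux_coeff_zero _ _ _ _ (by simp)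
      rw [e1, e2]; simp
    rw [h2] at h
    have : τ20 = 0 := by
      rcases mul_eq_zero.mp (by linarith : τ20 * c = 0) with h | h
      · exact h
      · exact absurd h hcne
    simp [this]
  | succ m =>
    have h := congrArg (fun p => p.coeff (m + 1 + 2)) hODE
    simp only [coeff_sub, coeff_add, coeff_zero] at h
    -- second term
    have h1 : ((C a42 * X ^ 2 + C a43 * X) * derivative (derivative y)).coeff (m + 1 + 2) = 0 := by
      rw [add_mul, coeff_add,
        show C a43 * X = C a43 * X ^ 1 by ring]
      rw [aux_coeff_zero _ _ _ _ (by omega), aux_coeff_zero _ _ _ _ (by omega)]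
      simp
    have h2 : ((C a30 * X ^ 3 + C a31 * X ^ 2 + C a32 * X + C a33) * derivative y).coeff
        (m + 1 + 2) = a30 * ((m + 1 : ℝ) * y.coeff (m + 1)) := by
      rw [add_mul, add_mul, add_mul, coeff_add, coeff_add, coeff_add,
        show C a32 * X = C a32 * X ^ 1 by ring,
        show C a33 * derivative y = C a33 * X ^ 0 * derivative y by ring]
      rw [aux_coeff_zero a31 2 _ _ (by omega), aux_coeff_zero a32 1 _ _ (by omega),
        aux_coeff_zero a33 0 _ _ (by omega)]
      rw [show m + 1 + 2 = m + 3 from rfl, aux_coeff_main a30 3 m]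
      rw [coeff_derivative]
      push_cast
      ring
    have h3 : ((C τ20 * X ^ 2 + C τ21 * X + C τ22) * y).coeff (m + 1 + 2) =
        τ20 * y.coeff (m + 1) := by
      rw [add_mul, add_mul, coeff_add, coeff_add,
        show C τ21 * X = C τ21 * X ^ 1 by ring,
        show C τ22 * y = C τ22 * X ^ 0 * y by ring]
      rw [aux_coeff_zero τ21 1 _ _ (by omega), aux_coeff_zero τ22 0 _ _ (by omega)]
      rw [aux_coeff_main τ20 2 (m + 1)]
      simp
    rw [h1, h2, h3] at h
    have key : (a30 * (m + 1 : ℝ) - τ20) * y.coeff (m + 1) = 0 := by linarith [h]; 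
    rcases mul_eq_zero.mp key with h' | h'
    · push_cast
      linarith
    · exact absurd h' hc0
end

section
/- Suppose a₃₃ ≠ 0 and y(r) = c₀ + c₁ r with c₁ ≠ 0 is a degree-one polynomial solution of (a₄₂ r² + a₄₃ r) y'' + (a₃₀ r³ + a₃₁ r² + a₃₂ r + a₃₃) y' − (τ₂₀ r² + τ₂₁ r + τ₂₂) y = 0. Then τ₂₀ = a₃₀, and the two determinant conditions τ₂₂(a₃₂ − τ₂₂) − a₃₃ τ₂₁ = 0 and τ₂₂(a₃₁ − τ₂₁) − a₃₃ a₃₀ = 0 hold. -/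
theorem stmt_6 (a42 a43 a30 a31 a32 a33 τ20 τ21 τ22 c0 c1 : ℝ)
    (ha33 : a33 ≠ 0) (hc1 : c1 ≠ 0)
    (y : ℝ → ℝ) (hy : y = fun r : ℝ => c0 + c1 * r)
    (hODE : ∀ r : ℝ,
        (a42 * r ^ 2 + a43 * r) * deriv (deriv y) r +
          (a30 * r ^ 3 + a31 * r ^ 2 + a32 * r + a33) * deriv y r -
          (τ20 * r ^ 2 + τ21 * r + τ22) * y r = 0) :
    τ20 = a30 ∧
    -τ22 * (a32 - τ22) + a33 * τ21 = 0 ∧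
    -τ22 * (a31 - τ21) + a33 * a30 = 0 := by
  have hd : deriv y = fun _ : ℝ => c1 := by
    subst hy
    ext r
    rw [deriv_const_add]
    simpa using (deriv_const_mul c1 (differentiableAt_id' (x := r))).trans (by simp)
  have hdd : deriv (deriv y) = fun _ : ℝ => 0 := by
    rw [hd]; ext r; simp
  have key : ∀ r : ℝ,
      (a30 * r ^ 3 + a31 * r ^ 2 + a32 * r + a33) * c1 -
        (τ20 * r ^ 2 + τ21 * r + τ22) * (c0 + c1 * r) = 0 := by
    intro r
    have := hODE r
    rw [hdd, hd, hy] at this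
    simp only at this
    linarith [this]
  have h0 := key 0
  have h1 := key 1
  have hm1 := key (-1)
  have h2 := key 2
  -- extract coefficient equations
  have e0 : a33 * c1 - τ22 * c0 = 0 := by nlinarith [h0]
  have e1 : a32 * c1 - τ21 * c0 - τ22 * c1 = 0 := by nlinarith [h0, h1, hm1, h2]
  have e2 : a31 * c1 - τ20 * c0 - τ21 * c1 = 0 := by nlinarith [h0, h1, hm1, h2]
  have e3 : a30 * c1 - τ20 * c1 = 0 := by nlinarith [h0, h1, hm1, h2]
  have ht20 : τ20 = a30 := by
    have h : (τ20 - a30) * c1 = 0 := by linear_combination -e3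
    have := (mul_eq_zero.mp h).resolve_right hc1
    linarith
  refine ⟨ht20, ?_, ?_⟩
  · -- -τ22*(a32-τ22) + a33*τ21 = 0
    -- from e1: a32 c1 = τ21 c0 + τ22 c1 ; e0: a33 c1 = τ22 c0
    have h : (-τ22 * (a32 - τ22) + a33 * τ21) * c1 = 0 := by
      linear_combination (-τ22) * e1 + τ21 * e0
    exact (mul_eq_zero.mp h).resolve_right hc1
  · subst ht20
    have h : (-τ22 * (a31 - τ21) + a33 * τ20) * c1 = 0 := by
      linear_combination (-τ22) * e2 + τ20 * e0
    exact (mul_eq_zero.mp h).resolve_right hc1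
end

section
/- Let b > 0, β > 0, k real, and define u(r) = r^{(k−1)/2} (1 + r/β) exp(−r/β − (b/2) r²). Then u satisfies on (0,∞) the equation −u'' + [(k−1)(k−3)/(4r²) + (2bβ² − (k+1))/(β(r+β)) + (2b/β) r + b² r²] u = E u with E = b(k+2) − 1/β². -/
/-! Write `u = r ^ p * g` with `p = (k - 1) / 2` and `g = (1 + r / β) * exp φ`. Pulling out `r ^ p`
turns `u''` into `r ^ p (g'' + 2 p g' / r + p (p - 1) g / r ^ 2)`, and `p (p - 1) / r ^ 2` is exactly
the centrifugal term `(k - 1)(k - 3) / (4 r ^ 2)`. Since `g'` and `g''` are `exp φ` times explicit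
rational functions of `r`, the equation reduces to a rational identity. -/

open Filter Topology

theorem hasDerivAt_deriv_rpow_mul {g g' : ℝ → ℝ} {g'' p r : ℝ} (hr : 0 < r)
    (hg : ∀ᶠ x in 𝓝 r, HasDerivAt g (g' x) x) (hg' : HasDerivAt g' g'' r) :
    HasDerivAt (deriv fun x => x ^ p * g x)
      (r ^ p * (g'' + 2 * p / r * g' r + p * (p - 1) / r ^ 2 * g r)) r := by
  have hpow : ∀ q : ℝ, ∀ x, 0 < x → HasDerivAt (fun y : ℝ => y ^ q) (q * x ^ (q - 1)) x :=
    fun q x hx => Real.hasDerivAt_rpow_const (Or.inl hx.ne')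
  have hfirst : deriv (fun x => x ^ p * g x) =ᶠ[𝓝 r]
      fun x => p * x ^ (p - 1) * g x + x ^ p * g' x := by
    filter_upwards [hg, Ioi_mem_nhds hr] with x hgx hx
    exact ((hpow p x hx).mul hgx).deriv
  have hsecond := (((hpow (p - 1) r hr).const_mul p).mul hg.self_of_nhds).add
    ((hpow p r hr).mul hg')
  refine (hsecond.congr_of_eventuallyEq hfirst).congr_deriv ?_
  have hp1 : r ^ (p - 1) = r ^ p / r := Real.rpow_sub_one hr.ne' p
  have hp2 : r ^ (p - 1 - 1) = r ^ p / r ^ 2 := by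
    rw [Real.rpow_sub_one hr.ne', hp1, pow_two, div_div]
  rw [hp1, hp2]
  field_simp
  ring

section GaussianProduct

variable {f f' f'' φ φ' φ'' : ℝ → ℝ}
  (hf : ∀ x, HasDerivAt f (f' x) x) (hf' : ∀ x, HasDerivAt f' (f'' x) x)
  (hφ : ∀ x, HasDerivAt φ (φ' x) x) (hφ' : ∀ x, HasDerivAt φ' (φ'' x) x)
include hf hφ

theorem hasDerivAt_mul_exp (x : ℝ) :
    HasDerivAt (fun y => f y * Real.exp (φ y))
      ((f' x + f x * φ' x) * Real.exp (φ x)) x :=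
  ((hf x).mul (hφ x).exp).congr_deriv (by ring)

include hf' hφ'

theorem hasDerivAt_deriv_mul_exp (x : ℝ) :
    HasDerivAt (fun y => (f' y + f y * φ' y) * Real.exp (φ y))
      ((f'' x + 2 * f' x * φ' x + f x * (φ'' x + φ' x ^ 2)) * Real.exp (φ x)) x :=
  hasDerivAt_mul_exp (f := fun y => f' y + f y * φ' y) (fun y => (hf' y).add ((hf y).mul (hφ' y)))
    hφ x |>.congr_deriv (by ring)

end GaussianProduct

theorem stmt_7_general (b β k : ℝ) (hβ : 0 < β)
    (u : ℝ → ℝ)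
    (hu : u = fun r : ℝ =>
      r ^ ((k - 1) / 2) * (1 + r / β) * Real.exp (-(r / β) - (b / 2) * r ^ 2))
    (E : ℝ) (hE : E = b * (k + 2) - 1 / β ^ 2) :
    ∀ r ∈ Set.Ioi (0 : ℝ),
      -(deriv (deriv u) r) +
        ((k - 1) * (k - 3) / (4 * r ^ 2) + (2 * b * β ^ 2 - (k + 1)) / (β * (r + β)) +
          (2 * b / β) * r + b ^ 2 * r ^ 2) * u r = E * u r := by
  intro r (hr : 0 < r)
  have hf : ∀ x : ℝ, HasDerivAt (fun y => 1 + y / β) (1 / β) x := fun x =>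
    ((hasDerivAt_id x).div_const β).const_add 1
  have hφ : ∀ x : ℝ, HasDerivAt (fun y => -(y / β) - b / 2 * y ^ 2) (-(1 / β) - b * x) x :=
    fun x => (((hasDerivAt_id x).div_const β).neg.sub
      ((hasDerivAt_pow 2 x).const_mul (b / 2))).congr_deriv (by norm_num; ring)
  have hφ' : ∀ x : ℝ, HasDerivAt (fun y => -(1 / β) - b * y) (-b) x := fun x =>
    ((hasDerivAt_id x).const_mul b).const_sub _ |>.congr_deriv (by simp)
  have hu' : u = fun x => x ^ ((k - 1) / 2) *
      ((1 + x / β) * Real.exp (-(x / β) - b / 2 * x ^ 2)) := by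
    rw [hu]; funext x; ring
  have hu'' := (hasDerivAt_deriv_rpow_mul (p := (k - 1) / 2) hr
    (Eventually.of_forall (hasDerivAt_mul_exp hf hφ))
    (hasDerivAt_deriv_mul_exp hf (fun _ => hasDerivAt_const _ _) hφ hφ' r)).deriv
  rw [hu', hu'', hE]
  have hrβ : r + β ≠ 0 := by positivity
  field_simp
  ring

theorem stmt_7 (b β k : ℝ) (hb : 0 < b) (hβ : 0 < β)
    (u : ℝ → ℝ)
    (hu : u = fun r : ℝ =>
      r ^ ((k - 1) / 2) * (1 + r / β) * Real.exp (-(r / β) - (b / 2) * r ^ 2))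
    (E : ℝ) (hE : E = b * (k + 2) - 1 / β ^ 2) :
    ∀ r ∈ Set.Ioi (0 : ℝ),
      -(deriv (deriv u) r) +
        ((k - 1) * (k - 3) / (4 * r ^ 2) + (2 * b * β ^ 2 - (k + 1)) / (β * (r + β)) +
          (2 * b / β) * r + b ^ 2 * r ^ 2) * u r = E * u r :=
  stmt_7_general b β k hβ u hu E hE
end

section
/- Let b > 0, β > 0, c real, k > 0 real, and set a = 4bβ − βc²/(4b²) + (c/b − 2/β − βc²/(4b²))k. Assume −16b³k + 4b²βc(3+5k) + bβ²(32b³ − 8c²(1+k)) + cβ³(c²(1+k) − 8b³) = 0. Then u(r) = r^{(k−1)/2}(1 + (c/(2b)) r + ((βc − 2b)/(2bβ²)) r²) exp(−(c/(2b)) r − (b/2) r²) solves −u'' + [(k−1)(k−3)/(4r²) + a/(r+β) + c r + b² r²] u = (b(k+4) − c²/(4b²)) u on (0,∞). -/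
/-!
Write `u r = r ^ p * (P r * exp (Q r))` with `p = (k - 1) / 2`, `P` the quadratic factor and `Q` the
quadratic exponent. Then `u''` is `r ^ p * exp (Q r)` times a rational function of `r`, and once
the denominators `r` and `r + β` are cleared, the residual `-u'' + (V - E) u` becomes a multiple of
the left-hand side of `hroot`: the choice of `a` and of the energy `E` kills every other term.
-/

open Real

theorem hasDerivAt_quadratic (a₀ a₁ a₂ x : ℝ) :
    HasDerivAt (fun x => a₀ + a₁ * x + a₂ * x ^ 2) (a₁ + 2 * a₂ * x) x := by
  refine (((hasDerivAt_const_mul a₁).const_add a₀).fun_add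
    ((hasDerivAt_pow 2 x).const_mul a₂)).congr_deriv ?_
  norm_num
  ring

theorem hasDerivAt_mul_exp_s9 {P Q : ℝ → ℝ} {P' Q' x : ℝ} (hP : HasDerivAt P P' x)
    (hQ : HasDerivAt Q Q' x) :
    HasDerivAt (fun x => P x * exp (Q x)) ((P' + P x * Q') * exp (Q x)) x :=
  (hP.fun_mul hQ.exp).congr_deriv (by ring)

theorem hasDerivAt_deriv_mul_exp_s9 {P P' Q Q' : ℝ → ℝ} {P'' Q'' x : ℝ}
    (hP : HasDerivAt P (P' x) x) (hP' : HasDerivAt P' P'' x)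
    (hQ : HasDerivAt Q (Q' x) x) (hQ' : HasDerivAt Q' Q'' x) :
    HasDerivAt (fun x => (P' x + P x * Q' x) * exp (Q x))
      ((P'' + 2 * P' x * Q' x + P x * Q'' + P x * Q' x ^ 2) * exp (Q x)) x :=
  (hasDerivAt_mul_exp_s9 (hP'.fun_add (hP.fun_mul hQ')) hQ).congr_deriv (by ring)

theorem deriv_deriv_rpow_mul {g g' : ℝ → ℝ} {g'' : ℝ} (p : ℝ)
    (hg : ∀ x, 0 < x → HasDerivAt g (g' x) x) {r : ℝ} (hg' : HasDerivAt g' g'' r)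
    (hr : 0 < r) :
    deriv (deriv fun x => x ^ p * g x) r =
      r ^ p * (p * (p - 1) / r ^ 2 * g r + 2 * p / r * g' r + g'') := by
  have heq : deriv (fun x => x ^ p * g x) =ᶠ[nhds r]
      fun x => p * x ^ (p - 1) * g x + x ^ p * g' x :=
    Filter.eventually_of_mem (Ioi_mem_nhds hr) fun x hx =>
      ((hasDerivAt_rpow_const (Or.inl (ne_of_gt hx))).fun_mul (hg x hx)).deriv
  have hsecond :=
    (((hasDerivAt_rpow_const (p := p - 1) (Or.inl hr.ne')).const_mul p).fun_mul
      (hg r hr)).fun_add ((hasDerivAt_rpow_const (p := p) (Or.inl hr.ne')).fun_mul hg')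
  rw [heq.deriv_eq, hsecond.deriv, sub_sub, one_add_one_eq_two, rpow_sub hr, rpow_sub hr,
    rpow_one, rpow_two]
  field_simp
  ring

theorem stmt_9_general (b β c k a : ℝ) (hb : 0 < b) (hβ : 0 < β)
    (ha : a = 4 * b * β - β * c ^ 2 / (4 * b ^ 2) +
      (c / b - 2 / β - β * c ^ 2 / (4 * b ^ 2)) * k)
    (hroot : -16 * b ^ 3 * k + 4 * b ^ 2 * β * c * (3 + 5 * k) +
        b * β ^ 2 * (32 * b ^ 3 - 8 * c ^ 2 * (1 + k)) +
        c * β ^ 3 * (c ^ 2 * (1 + k) - 8 * b ^ 3) = 0)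
    (u : ℝ → ℝ)
    (hu : u = fun r : ℝ =>
      r ^ ((k - 1) / 2) *
        (1 + (c / (2 * b)) * r + ((β * c - 2 * b) / (2 * b * β ^ 2)) * r ^ 2) *
        Real.exp (-(c / (2 * b)) * r - (b / 2) * r ^ 2)) :
    ∀ r ∈ Set.Ioi (0 : ℝ),
      -(deriv (deriv u) r) +
        ((k - 1) * (k - 3) / (4 * r ^ 2) + a / (r + β) + c * r + b ^ 2 * r ^ 2) * u r
        = (b * (k + 4) - c ^ 2 / (4 * b ^ 2)) * u r := by
  intro r (hr : 0 < r)
  set d := (β * c - 2 * b) / (2 * b * β ^ 2)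
  have hu' : u = fun x => x ^ ((k - 1) / 2) *
      ((1 + c / (2 * b) * x + d * x ^ 2) * exp (0 + -(c / (2 * b)) * x + -(b / 2) * x ^ 2)) := by
    subst hu; funext x; ring_nf
  have hg' := hasDerivAt_deriv_mul_exp_s9 (hasDerivAt_quadratic 1 (c / (2 * b)) d r)
    ((hasDerivAt_const_mul (2 * d)).const_add (c / (2 * b)))
    (hasDerivAt_quadratic 0 (-(c / (2 * b))) (-(b / 2)) r)
    ((hasDerivAt_const_mul (2 * -(b / 2))).const_add (-(c / (2 * b))))
  rw [hu', deriv_deriv_rpow_mul _ (fun x _ => hasDerivAt_mul_exp_s9 (hasDerivAt_quadratic _ _ _ x)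
    (hasDerivAt_quadratic _ _ _ x)) hg' hr]
  have hrβ : r + β ≠ 0 := by positivity
  subst ha
  simp only [d]
  field_simp
  linear_combination (-4 * r ^ 3 * (r + β)) * hroot

theorem stmt_9 (b β c k a : ℝ) (hb : 0 < b) (hβ : 0 < β) (hk : 0 < k)
    (ha : a = 4 * b * β - β * c ^ 2 / (4 * b ^ 2) +
      (c / b - 2 / β - β * c ^ 2 / (4 * b ^ 2)) * k)
    (hroot : -16 * b ^ 3 * k + 4 * b ^ 2 * β * c * (3 + 5 * k) +
        b * β ^ 2 * (32 * b ^ 3 - 8 * c ^ 2 * (1 + k)) +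
        c * β ^ 3 * (c ^ 2 * (1 + k) - 8 * b ^ 3) = 0)
    (u : ℝ → ℝ)
    (hu : u = fun r : ℝ =>
      r ^ ((k - 1) / 2) *
        (1 + (c / (2 * b)) * r + ((β * c - 2 * b) / (2 * b * β ^ 2)) * r ^ 2) *
        Real.exp (-(c / (2 * b)) * r - (b / 2) * r ^ 2)) :
    ∀ r ∈ Set.Ioi (0 : ℝ),
      -(deriv (deriv u) r) +
        ((k - 1) * (k - 3) / (4 * r ^ 2) + a / (r + β) + c * r + b ^ 2 * r ^ 2) * u r
        = (b * (k + 4) - c ^ 2 / (4 * b ^ 2)) * u r :=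
  stmt_9_general b β c k a hb hβ ha hroot u hu
end

section
/- Let b > 0, k ≠ 1 real, and a real, and set c = 2ab/(1−k) (equivalently 2ab + (k−1)c = 0). Then f₀(r) = 1 solves r f'' + (−2b r² − (c/b) r + k − 1) f' + (2b·0·r − a + (1−k)c/(2b)) f = 0, and consequently u(r) = r^{(k−1)/2} exp(−(c/(2b)) r − (b/2) r²) solves −u'' + [(k−1)(k−3)/(4r²) + a/r + c r + b² r²] u = (bk − c²/(4b²)) u on (0,∞). -/
/-!
For `g(r) = r ^ p * exp (s r - t r²)` the logarithmic derivative is `L = p / r + s - 2 t r`, so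
`g'' / g = L² + L' = (p² - p) / r² + 2 p s / r + (s² - 2 t (2 p + 1)) - 4 s t r + 4 t² r²`.
With `p = (k - 1) / 2`, `s = -c / (2b)`, `t = b / 2` this is the given potential minus the energy,
the `1 / r` coefficient matching `a` exactly when `2ab + (k - 1) c = 0`.
-/

open Real Filter Topology

section RpowMulGaussian

variable {p s t x : ℝ}

theorem hasDerivAt_rpow_mul_exp_quadratic (hx : 0 < x) :
    HasDerivAt (fun y => y ^ p * exp (s * y - t * y ^ 2))
      (x ^ p * exp (s * x - t * x ^ 2) * (p / x + s - 2 * t * x)) x := by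
  have hpow : HasDerivAt (fun y => y ^ p) (p * x ^ (p - 1)) x :=
    hasDerivAt_rpow_const (Or.inl hx.ne')
  have hquad : HasDerivAt (fun y => s * y - t * y ^ 2) (s - t * (2 * x)) x := by
    simpa using ((hasDerivAt_id x).const_mul s).fun_sub ((hasDerivAt_pow 2 x).const_mul t)
  refine (hpow.fun_mul hquad.exp).congr_deriv ?_
  rw [rpow_sub_one hx.ne']
  field_simp
  ring

theorem hasDerivAt_logDeriv_rpow_mul_exp_quadratic (hx : 0 < x) :
    HasDerivAt (fun y => p / y + s - 2 * t * y) (-p / x ^ 2 - 2 * t) x := by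
  have hinv : HasDerivAt (fun y => p / y) (-p / x ^ 2) x := by
    simpa [div_eq_mul_inv, neg_div] using (hasDerivAt_inv hx.ne').const_mul p
  simpa using (hinv.add_const s).fun_sub ((hasDerivAt_id x).const_mul (2 * t))

theorem deriv_deriv_rpow_mul_exp_quadratic (hx : 0 < x) :
    deriv (deriv fun y => y ^ p * exp (s * y - t * y ^ 2)) x =
      x ^ p * exp (s * x - t * x ^ 2) * ((p / x + s - 2 * t * x) ^ 2 - p / x ^ 2 - 2 * t) := by
  have hderiv : deriv (fun y => y ^ p * exp (s * y - t * y ^ 2)) =ᶠ[𝓝 x]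
      fun y => y ^ p * exp (s * y - t * y ^ 2) * (p / y + s - 2 * t * y) :=
    eventually_gt_nhds hx |>.mono fun y hy => (hasDerivAt_rpow_mul_exp_quadratic hy).deriv
  rw [hderiv.deriv_eq, ((hasDerivAt_rpow_mul_exp_quadratic hx).fun_mul
    (hasDerivAt_logDeriv_rpow_mul_exp_quadratic hx)).deriv]
  ring

end RpowMulGaussian

theorem stmt_11 (b a k c : ℝ) (hb : 0 < b) (hk : k ≠ 1)
    (hc : c = 2 * a * b / (1 - k))
    (f : ℝ → ℝ) (hf : f = fun _ : ℝ => (1 : ℝ))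
    (u : ℝ → ℝ)
    (hu : u = fun r : ℝ =>
      r ^ ((k - 1) / 2) * Real.exp (-(c / (2 * b)) * r - (b / 2) * r ^ 2)) :
    (∀ r ∈ Set.Ioi (0 : ℝ),
        r * deriv (deriv f) r +
          (-2 * b * r ^ 2 - (c / b) * r + k - 1) * deriv f r +
          (2 * b * 0 * r - a + (1 - k) * c / (2 * b)) * f r = 0) ∧
    (∀ r ∈ Set.Ioi (0 : ℝ),
        -(deriv (deriv u) r) +
          ((k - 1) * (k - 3) / (4 * r ^ 2) + a / r + c * r + b ^ 2 * r ^ 2) * u r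
          = (b * k - c ^ 2 / (4 * b ^ 2)) * u r) := by
  have hcoulomb : (1 - k) * c / (2 * b) = a := by
    rw [hc]
    field_simp [sub_ne_zero.mpr hk.symm]
  subst hf hu hcoulomb
  refine ⟨fun r _ => by simp, fun r hr => ?_⟩
  have hr : 0 < r := hr
  rw [deriv_deriv_rpow_mul_exp_quadratic hr]
  field_simp
  ring
end

section
/- Let b > 0, k > 1 real, and a, c real satisfying 8b³(1−k) + 4b²a² + 4kcba + c²(k²−1) = 0. Then f₁(r) = 1 + ((2ab + (k−1)c)/(2b(k−1))) r solves r f'' + (−2b r² − (c/b) r + k − 1) f' + (2b r − a + (1−k)c/(2b)) f = 0 identically, and u(r) = r^{(k−1)/2} f₁(r) exp(−(c/(2b)) r − (b/2) r²) solves −u'' + [(k−1)(k−3)/(4r²) + a/r + c r + b² r²] u = (b(k+2) − c²/(4b²)) u on (0,∞). -/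
/-!
Write `u = w f` with gauge factor `w r = r^((k-1)/2) e^(φ r)`, `φ r = -(c/(2b)) r - (b/2) r²`, whose
logarithmic derivative is `p r = (k-1)/(2r) - c/(2b) - b r`. Then `u'' = w (f'' + 2 p f' + (p' + p²) f)`,
and for this `p` one gets `-u'' + (V - E) u = -(w/r) · H f` with `H` the biconfluent Heun operator:
`φ` is chosen so that the `c r` term of `V` cancels, and `E` so that the constant terms do.
Hence it suffices that `H f₁ = 0`. For linear `f₁` the `r²`-coefficient vanishes identically, the
constant one by the choice of the slope, and the `r`-coefficient is a multiple of the constraint on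
`a, b, c, k`.
-/

open Real Filter Topology

noncomputable def biconfluentHeunOp (b a c k : ℝ) (f : ℝ → ℝ) (r : ℝ) : ℝ :=
  r * deriv (deriv f) r + (-2 * b * r ^ 2 - (c / b) * r + k - 1) * deriv f r +
    (2 * b * r - a + (1 - k) * c / (2 * b)) * f r

noncomputable def heunGauge (b c k r : ℝ) : ℝ :=
  r ^ ((k - 1) / 2) * exp (-(c / (2 * b)) * r - (b / 2) * r ^ 2)

theorem deriv_deriv_mul_of_hasDerivAt_logDeriv {w p f : ℝ → ℝ} {x p' : ℝ}
    (hw : ∀ᶠ y in 𝓝 x, HasDerivAt w (p y * w y) y) (hp : HasDerivAt p p' x)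
    (hf : ContDiff ℝ 2 f) :
    deriv (deriv fun y => w y * f y) x =
      w x * (deriv (deriv f) x + 2 * p x * deriv f x + (p' + p x ^ 2) * f x) := by
  have hf' : ContDiff ℝ (1 + 1) f := hf
  have hf1 y : HasDerivAt f (deriv f y) y := (hf.differentiable (by norm_num) y).hasDerivAt
  have hf2 y : HasDerivAt (deriv f) (deriv (deriv f) y) y :=
    ((contDiff_succ_iff_deriv.mp hf').2.2.differentiable one_ne_zero y).hasDerivAt
  have hfirst : deriv (fun y => w y * f y) =ᶠ[𝓝 x] fun y => w y * (deriv f y + p y * f y) :=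
    hw.mono fun y hy => (hy.mul (hf1 y)).deriv.trans (by beta_reduce; ring)
  rw [hfirst.deriv_eq]
  exact (hw.self_of_nhds.mul ((hf2 x).add (hp.mul (hf1 x)))).deriv.trans
    (by simp only [Pi.add_apply, Pi.mul_apply]; ring)

theorem hasDerivAt_rpow_mul_exp {φ : ℝ → ℝ} {s x d : ℝ} (hx : x ≠ 0) (hφ : HasDerivAt φ d x) :
    HasDerivAt (fun r => r ^ s * exp (φ r)) ((s / x + d) * (x ^ s * exp (φ x))) x := by
  refine ((hasDerivAt_rpow_const (Or.inl hx)).mul hφ.exp).congr_deriv ?_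
  rw [rpow_sub_one hx]
  ring

theorem neg_deriv_deriv_heunGauge_mul (a : ℝ) {b c k r : ℝ} {f : ℝ → ℝ} (hb : b ≠ 0)
    (hf : ContDiff ℝ 2 f) (hr : 0 < r) :
    -deriv (deriv fun x => heunGauge b c k x * f x) r +
        ((k - 1) * (k - 3) / (4 * r ^ 2) + a / r + c * r + b ^ 2 * r ^ 2 -
          (b * (k + 2) - c ^ 2 / (4 * b ^ 2))) * (heunGauge b c k r * f r) =
      -(heunGauge b c k r / r) * biconfluentHeunOp b a c k f r := by
  have hw : ∀ᶠ y in 𝓝 r, HasDerivAt (heunGauge b c k)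
      (((k - 1) / 2 * y⁻¹ - c / (2 * b) - b * y) * heunGauge b c k y) y := by
    filter_upwards [Ioi_mem_nhds hr] with y hy
    have hφ : HasDerivAt (fun x => -(c / (2 * b)) * x - (b / 2) * x ^ 2)
        (-(c / (2 * b)) - b * y) y :=
      (((hasDerivAt_id' y).const_mul _).sub ((hasDerivAt_pow 2 y).const_mul _)).congr_deriv
        (by ring)
    exact (hasDerivAt_rpow_mul_exp hy.ne' hφ).congr_deriv (by rw [heunGauge]; ring)
  have hp : HasDerivAt (fun y => (k - 1) / 2 * y⁻¹ - c / (2 * b) - b * y)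
      (-((k - 1) / 2) / r ^ 2 - b) r :=
    ((((hasDerivAt_inv hr.ne').const_mul _).sub_const _).sub
      ((hasDerivAt_id' r).const_mul b)).congr_deriv (by ring)
  rw [deriv_deriv_mul_of_hasDerivAt_logDeriv hw hp hf, biconfluentHeunOp]
  field_simp
  ring

theorem biconfluentHeunOp_linear_eq_zero {b a c k : ℝ} (hb : b ≠ 0) (hk : k ≠ 1)
    (hcond : 8 * b ^ 3 * (1 - k) + 4 * b ^ 2 * a ^ 2 + 4 * k * c * b * a +
      c ^ 2 * (k ^ 2 - 1) = 0) (r : ℝ) :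
    biconfluentHeunOp b a c k
      (fun r => 1 + ((2 * a * b + (k - 1) * c) / (2 * b * (k - 1))) * r) r = 0 := by
  have hk' : k - 1 ≠ 0 := sub_ne_zero.mpr hk
  have hderiv (m : ℝ) : deriv (fun r => 1 + m * r) = fun _ => m := by
    funext x
    simp
  simp only [biconfluentHeunOp, hderiv, deriv_const']
  field_simp
  linear_combination (-r) * hcond

theorem stmt_12 (b a c k : ℝ) (hb : 0 < b) (hk : 1 < k)
    (hcond : 8 * b ^ 3 * (1 - k) + 4 * b ^ 2 * a ^ 2 + 4 * k * c * b * a +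
      c ^ 2 * (k ^ 2 - 1) = 0)
    (f : ℝ → ℝ)
    (hf : f = fun r : ℝ => 1 + ((2 * a * b + (k - 1) * c) / (2 * b * (k - 1))) * r)
    (u : ℝ → ℝ)
    (hu : u = fun r : ℝ =>
      r ^ ((k - 1) / 2) * f r * Real.exp (-(c / (2 * b)) * r - (b / 2) * r ^ 2)) :
    (∀ r : ℝ,
        r * deriv (deriv f) r +
          (-2 * b * r ^ 2 - (c / b) * r + k - 1) * deriv f r +
          (2 * b * r - a + (1 - k) * c / (2 * b)) * f r = 0) ∧
    (∀ r ∈ Set.Ioi (0 : ℝ),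
        -(deriv (deriv u) r) +
          ((k - 1) * (k - 3) / (4 * r ^ 2) + a / r + c * r + b ^ 2 * r ^ 2) * u r
          = (b * (k + 2) - c ^ 2 / (4 * b ^ 2)) * u r) := by
  have hheun : ∀ r, biconfluentHeunOp b a c k f r = 0 := by
    subst hf
    exact biconfluentHeunOp_linear_eq_zero hb.ne' hk.ne' hcond
  refine ⟨hheun, fun r hr => ?_⟩
  have hu' : u = fun x => heunGauge b c k x * f x := by
    rw [hu]; funext x; rw [heunGauge]; ring
  have hsmooth : ContDiff ℝ 2 f := by rw [hf]; fun_prop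
  have hres := neg_deriv_deriv_heunGauge_mul a (c := c) (k := k) hb.ne' hsmooth hr
  rw [hheun, mul_zero] at hres
  rw [hu']
  beta_reduce
  linarith
end

section
/- Let b > 0, k > 1 real, and a, c real satisfying 32a(1−2k)b⁴ + 8(a³ − 2c(k−1)(3+2k))b³ + 12a²c(1+k)b² − 2ac²(1 − 3k(2+k))b + c³(k²−1)(k+3) = 0. Then f₂(r) = 1 + ((2ab + (k−1)c)/(2b(k−1))) r + ((16b³(1−k) + 4b²a² + 4kcba + c²(k²−1))/(8b²k(k−1))) r² solves r f'' + (−2b r² − (c/b) r + k − 1) f' + (4b r − a + (1−k)c/(2b)) f = 0 identically. -/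
/-!
Substituting the ansatz `f = 1 + A r + B r²` into `r f'' + (-2b r² - β r + k - 1) f' + (4b r + α) f`
leaves a polynomial whose `r³` coefficient cancels identically, so `f` is a solution as soon as the
coefficients of `1`, `r` and `r²` vanish. The first two of these are linear in `A` and `B` and
determine them (this is where the formulas for the coefficients of `f₂` come from); the third then
becomes, after clearing denominators, exactly the quantisation condition on `a, b, c, k`.
-/

theorem deriv_quadratic (p q s : ℝ) :
    deriv (fun r : ℝ => p + q * r + s * r ^ 2) = fun r => q + 2 * s * r := by
  funext r
  have hlin : HasDerivAt (fun r : ℝ => p + q * r) q r := by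
    simpa using ((hasDerivAt_id r).const_mul q).const_add p
  have hsq : HasDerivAt (fun r : ℝ => s * r ^ 2) (s * (2 * r)) r := by
    simpa using (hasDerivAt_pow 2 r).const_mul s
  have h : HasDerivAt (fun r : ℝ => p + q * r + s * r ^ 2) (q + s * (2 * r)) r := hlin.add hsq
  rw [h.deriv]
  ring

theorem deriv_affine (q s : ℝ) : deriv (fun r : ℝ => q + s * r) = fun _ => s := by
  funext r
  simp

theorem quadratic_solves_ode_of_coeffs {b β k α A B : ℝ} {f : ℝ → ℝ}
    (hf : f = fun r : ℝ => 1 + A * r + B * r ^ 2)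
    (h₀ : (k - 1) * A + α = 0)
    (h₁ : 2 * k * B + (α - β) * A + 4 * b = 0)
    (h₂ : 2 * b * A + (α - 2 * β) * B = 0) (r : ℝ) :
    r * deriv (deriv f) r + (-2 * b * r ^ 2 - β * r + k - 1) * deriv f r + (4 * b * r + α) * f r
      = 0 := by
  subst hf
  simp only [deriv_quadratic, deriv_affine]
  linear_combination h₀ + r * h₁ + r ^ 2 * h₂

theorem stmt_13 (b a c k : ℝ) (hb : 0 < b) (hk : 1 < k)
    (hcond : 32 * a * (1 - 2 * k) * b ^ 4 +
        8 * (a ^ 3 - 2 * c * (k - 1) * (3 + 2 * k)) * b ^ 3 +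
        12 * a ^ 2 * c * (1 + k) * b ^ 2 -
        2 * a * c ^ 2 * (1 - 3 * k * (2 + k)) * b +
        c ^ 3 * (k ^ 2 - 1) * (k + 3) = 0)
    (f : ℝ → ℝ)
    (hf : f = fun r : ℝ =>
      1 + ((2 * a * b + (k - 1) * c) / (2 * b * (k - 1))) * r +
        ((16 * b ^ 3 * (1 - k) + 4 * b ^ 2 * a ^ 2 + 4 * k * c * b * a +
            c ^ 2 * (k ^ 2 - 1)) / (8 * b ^ 2 * k * (k - 1))) * r ^ 2) :
    ∀ r : ℝ,
      r * deriv (deriv f) r +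
        (-2 * b * r ^ 2 - (c / b) * r + k - 1) * deriv f r +
        (4 * b * r - a + (1 - k) * c / (2 * b)) * f r = 0 := by
  intro r
  have hb₀ : b ≠ 0 := hb.ne'
  have hk₁ : k - 1 ≠ 0 := sub_ne_zero.mpr hk.ne'
  have hk₀ : k ≠ 0 := (zero_lt_one.trans hk).ne'
  set A := (2 * a * b + (k - 1) * c) / (2 * b * (k - 1)) with hA
  set B := (16 * b ^ 3 * (1 - k) + 4 * b ^ 2 * a ^ 2 + 4 * k * c * b * a + c ^ 2 * (k ^ 2 - 1)) /
    (8 * b ^ 2 * k * (k - 1)) with hB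
  set α := -a + (1 - k) * c / (2 * b) with hα
  have h₀ : (k - 1) * A + α = 0 := by rw [hA, hα]; field_simp; ring
  have h₁ : 2 * k * B + (α - c / b) * A + 4 * b = 0 := by rw [hA, hB, hα]; field_simp; ring
  have h₂ : 2 * b * A + (α - 2 * (c / b)) * B = 0 := by
    rw [hA, hB, hα]
    field_simp
    linear_combination (-1) * hcond
  linear_combination quadratic_solves_ode_of_coeffs hf h₀ h₁ h₂ r
end

section
/- Let b > 0, β > 0, R > 0, a, c, k real, and suppose f is twice differentiable on (0,R) and satisfies the equation (−4b² r³ + 4b²(R−β) r² + 4b²βR r) f'' + (8b³ r⁴ + 4b(c + 2b²(β−R)) r³ − 4b(b − βc + bk + 2b²βR + cR) r² − 4b(βcR + b(β + βk + R − kR)) r + 4b²β(k−1)R) f' + ([4b³(2+k) − c² − 4b²E] r³ + (4ab² + 2bc(1+k) + (c² + 4b²E)(R−β) + 4b³(β(k+2) − kR)) r² + (2b(βc(1+k) − 2b(k−1)) + (β(c² + 4b²E) − 4ab² − 2bc(k−1) − 4b³βk)R) r − 2bβ(k−1)(2b + cR)) f = 0. Then u(r) = r^{(k−1)/2}(R −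 r) exp(−(c/(2b)) r − (b/2) r²) f(r) satisfies −u'' + [(k−1)(k−3)/(4r²) + a/(r+β) + c r + b² r²] u = E u on (0,R), and u(R) = 0. -/
/-!
Write `u = φ f` with `φ r = r ^ ((k - 1) / 2) * (R - r) * exp (-(c / (2b)) r - (b / 2) r²)` and
`L = φ' / φ`. Then `φ'' = φ (L² + L')`, so `-u'' + (V - E) u = -φ (f'' + 2 L f' + (L² + L' - V + E) f)`.
The equation for `f` is exactly this bracket multiplied by its leading coefficient
`4 b² r (R - r) (r + β)`; the factor `R - r` of `φ` gives `u R = 0`.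
-/

open Filter Topology

lemma ContDiffOn.eventually_hasDerivAt_deriv {𝕜 F : Type*} [NontriviallyNormedField 𝕜]
    [NormedAddCommGroup F] [NormedSpace 𝕜 F] {f : 𝕜 → F} {s : Set 𝕜} {x : 𝕜}
    (hf : ContDiffOn 𝕜 2 f s) (hs : IsOpen s) (hx : x ∈ s) :
    (∀ᶠ y in 𝓝 x, HasDerivAt f (deriv f y) y) ∧ HasDerivAt (deriv f) (deriv (deriv f) x) x := by
  have hf' : ContDiffOn 𝕜 1 (deriv f) s := hf.deriv_of_isOpen hs (by norm_num)
  refine ⟨eventually_of_mem (hs.mem_nhds hx) fun y hy => ?_, ?_⟩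
  · exact ((hf.contDiffAt (hs.mem_nhds hy)).differentiableAt (by norm_num)).hasDerivAt
  · exact ((hf'.contDiffAt (hs.mem_nhds hx)).differentiableAt (by norm_num)).hasDerivAt

lemma hasDerivAt_deriv_mul_of_eventually {φ f φ' f' : ℝ → ℝ} {x φ'' f'' : ℝ}
    (hφ : ∀ᶠ y in 𝓝 x, HasDerivAt φ (φ' y) y) (hf : ∀ᶠ y in 𝓝 x, HasDerivAt f (f' y) y)
    (hφ' : HasDerivAt φ' φ'' x) (hf' : HasDerivAt f' f'' x) :
    HasDerivAt (deriv fun y => φ y * f y) (φ'' * f x + 2 * (φ' x * f' x) + φ x * f'') x := by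
  have hderiv : (deriv fun y => φ y * f y) =ᶠ[𝓝 x] fun y => φ' y * f y + φ y * f' y :=
    (hφ.and hf).mono fun y h => (h.1.mul h.2).deriv
  exact (((hφ'.mul hf.self_of_nhds).add (hφ.self_of_nhds.mul hf')).congr_of_eventuallyEq
    hderiv).congr_deriv (by ring)

namespace HardConfinement

noncomputable section

def gauge (b c R k r : ℝ) : ℝ :=
  r ^ ((k - 1) / 2) * (R - r) * Real.exp (-(c / (2 * b)) * r - (b / 2) * r ^ 2)

def gaugeLogDeriv (b c R k r : ℝ) : ℝ :=
  (k - 1) / 2 / r - 1 / (R - r) - c / (2 * b) - b * r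

def gaugeLogDeriv' (b R k r : ℝ) : ℝ :=
  -((k - 1) / 2) / r ^ 2 - 1 / (R - r) ^ 2 - b

def effectivePotential (a b c β k r : ℝ) : ℝ :=
  (k - 1) * (k - 3) / (4 * r ^ 2) + a / (r + β) + c * r + b ^ 2 * r ^ 2

def odeCoeff₂ (b β R r : ℝ) : ℝ :=
  -4 * b ^ 2 * r ^ 3 + 4 * b ^ 2 * (R - β) * r ^ 2 + 4 * b ^ 2 * β * R * r

def odeCoeff₁ (b c β R k r : ℝ) : ℝ :=
  8 * b ^ 3 * r ^ 4 + 4 * b * (c + 2 * b ^ 2 * (β - R)) * r ^ 3 -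
    4 * b * (b - β * c + b * k + 2 * b ^ 2 * β * R + c * R) * r ^ 2 -
    4 * b * (β * c * R + b * (β + β * k + R - k * R)) * r +
    4 * b ^ 2 * β * (k - 1) * R

def odeCoeff₀ (a b c β R k E r : ℝ) : ℝ :=
  (4 * b ^ 3 * (2 + k) - c ^ 2 - 4 * b ^ 2 * E) * r ^ 3 +
    (4 * a * b ^ 2 + 2 * b * c * (1 + k) + (c ^ 2 + 4 * b ^ 2 * E) * (R - β) +
      4 * b ^ 3 * (β * (k + 2) - k * R)) * r ^ 2 +
    (2 * b * (β * c * (1 + k) - 2 * b * (k - 1)) +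
      (β * (c ^ 2 + 4 * b ^ 2 * E) - 4 * a * b ^ 2 - 2 * b * c * (k - 1) -
        4 * b ^ 3 * β * k) * R) * r -
    2 * b * β * (k - 1) * (2 * b + c * R)

end

lemma odeCoeff₂_eq (b β R r : ℝ) : odeCoeff₂ b β R r = 4 * b ^ 2 * r * (R - r) * (r + β) := by
  unfold odeCoeff₂; ring

section Coefficients

variable {a b c β R k E r : ℝ}

lemma odeCoeff₁_eq (hb : b ≠ 0) (hr : r ≠ 0) (hrR : R - r ≠ 0) :
    odeCoeff₁ b c β R k r = 2 * gaugeLogDeriv b c R k r * odeCoeff₂ b β R r := by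
  rw [odeCoeff₂_eq]
  unfold odeCoeff₁ gaugeLogDeriv
  field_simp
  ring

lemma odeCoeff₀_eq (hb : b ≠ 0) (hr : r ≠ 0) (hrR : R - r ≠ 0) (hrβ : r + β ≠ 0) :
    odeCoeff₀ a b c β R k E r = (gaugeLogDeriv b c R k r ^ 2 + gaugeLogDeriv' b R k r -
      effectivePotential a b c β k r + E) * odeCoeff₂ b β R r := by
  rw [odeCoeff₂_eq]
  unfold odeCoeff₀ gaugeLogDeriv gaugeLogDeriv' effectivePotential
  field_simp
  ring

end Coefficients

section Derivatives

variable {b c R k r : ℝ}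

lemma hasDerivAt_gauge (hr : 0 < r) (hrR : r ≠ R) :
    HasDerivAt (gauge b c R k) (gauge b c R k r * gaugeLogDeriv b c R k r) r := by
  have hpow : HasDerivAt (fun y : ℝ => y ^ ((k - 1) / 2)) ((k - 1) / 2 * r ^ ((k - 1) / 2 - 1)) r :=
    Real.hasDerivAt_rpow_const (Or.inl hr.ne')
  have hexp : HasDerivAt (fun y : ℝ => Real.exp (-(c / (2 * b)) * y - (b / 2) * y ^ 2))
      (Real.exp (-(c / (2 * b)) * r - (b / 2) * r ^ 2) * (-(c / (2 * b)) - b * r)) r := by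
    refine HasDerivAt.exp ?_
    refine (((hasDerivAt_id r).const_mul (-(c / (2 * b)))).sub
      ((hasDerivAt_pow 2 r).const_mul (b / 2))).congr_deriv ?_
    simp only [mul_one, Nat.cast_ofNat, Nat.add_one_sub_one, pow_one, sub_right_inj]
    ring
  refine ((hpow.mul ((hasDerivAt_id r).const_sub R)).mul hexp).congr_deriv ?_
  have hRr : R - r ≠ 0 := sub_ne_zero.mpr hrR.symm
  simp only [Pi.mul_apply, id, Real.rpow_sub_one hr.ne']
  unfold gauge gaugeLogDeriv
  generalize c / (2 * b) = γ
  field_simp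
  ring

lemma hasDerivAt_gaugeLogDeriv (hr : r ≠ 0) (hrR : r ≠ R) :
    HasDerivAt (gaugeLogDeriv b c R k) (gaugeLogDeriv' b R k r) r := by
  have hRr : R - r ≠ 0 := sub_ne_zero.mpr hrR.symm
  have hdiv := (hasDerivAt_const r ((k - 1) / 2)).div (hasDerivAt_id r) hr
  have hpole := (hasDerivAt_const r (1 : ℝ)).div ((hasDerivAt_id r).const_sub R) hRr
  refine (((hdiv.sub hpole).sub_const (c / (2 * b))).sub
    ((hasDerivAt_id r).const_mul b)).congr_deriv ?_
  unfold gaugeLogDeriv'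
  simp only [id]
  field_simp
  ring

end Derivatives

end HardConfinement

open HardConfinement in
theorem stmt_17_general (b β R a c k E : ℝ) (hb : 0 < b) (hβ : 0 < β)
    (f : ℝ → ℝ) (hf : ContDiffOn ℝ 2 f (Set.Ioo 0 R))
    (hfODE : ∀ r ∈ Set.Ioo (0 : ℝ) R,
        (-4 * b ^ 2 * r ^ 3 + 4 * b ^ 2 * (R - β) * r ^ 2 + 4 * b ^ 2 * β * R * r) *
            deriv (deriv f) r +
          (8 * b ^ 3 * r ^ 4 + 4 * b * (c + 2 * b ^ 2 * (β - R)) * r ^ 3 -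
            4 * b * (b - β * c + b * k + 2 * b ^ 2 * β * R + c * R) * r ^ 2 -
            4 * b * (β * c * R + b * (β + β * k + R - k * R)) * r +
            4 * b ^ 2 * β * (k - 1) * R) * deriv f r +
          ((4 * b ^ 3 * (2 + k) - c ^ 2 - 4 * b ^ 2 * E) * r ^ 3 +
            (4 * a * b ^ 2 + 2 * b * c * (1 + k) + (c ^ 2 + 4 * b ^ 2 * E) * (R - β) +
              4 * b ^ 3 * (β * (k + 2) - k * R)) * r ^ 2 +
            (2 * b * (β * c * (1 + k) - 2 * b * (k - 1)) +
              (β * (c ^ 2 + 4 * b ^ 2 * E) - 4 * a * b ^ 2 - 2 * b * c * (k - 1) -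
                4 * b ^ 3 * β * k) * R) * r -
            2 * b * β * (k - 1) * (2 * b + c * R)) * f r = 0)
    (u : ℝ → ℝ)
    (hu : u = fun r : ℝ =>
      r ^ ((k - 1) / 2) * (R - r) * Real.exp (-(c / (2 * b)) * r - (b / 2) * r ^ 2) * f r) :
    (∀ r ∈ Set.Ioo (0 : ℝ) R,
        -(deriv (deriv u) r) +
          ((k - 1) * (k - 3) / (4 * r ^ 2) + a / (r + β) + c * r + b ^ 2 * r ^ 2) * u r
          = E * u r) ∧ u R = 0 := by
  subst hu
  refine ⟨fun r hr => ?_, by simp⟩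
  obtain ⟨hr0, hrR⟩ := hr
  have hRr : R - r ≠ 0 := sub_ne_zero.mpr hrR.ne'
  obtain ⟨hf', hf''⟩ := hf.eventually_hasDerivAt_deriv isOpen_Ioo ⟨hr0, hrR⟩
  have hu'' := hasDerivAt_deriv_mul_of_eventually (φ := gauge b c R k)
    (eventually_of_mem (isOpen_Ioo.mem_nhds ⟨hr0, hrR⟩) fun y hy => hasDerivAt_gauge hy.1 hy.2.ne)
    hf' ((hasDerivAt_gauge hr0 hrR.ne).mul (hasDerivAt_gaugeLogDeriv hr0.ne' hrR.ne)) hf''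
  have hode : odeCoeff₂ b β R r * deriv (deriv f) r + odeCoeff₁ b c β R k r * deriv f r +
      odeCoeff₀ a b c β R k E r * f r = 0 := hfODE r ⟨hr0, hrR⟩
  rw [odeCoeff₁_eq hb.ne' hr0.ne' hRr, odeCoeff₀_eq hb.ne' hr0.ne' hRr (by positivity)] at hode
  have hA : odeCoeff₂ b β R r ≠ 0 := by rw [odeCoeff₂_eq]; positivity
  have hreduced : deriv (deriv f) r + 2 * gaugeLogDeriv b c R k r * deriv f r +
      (gaugeLogDeriv b c R k r ^ 2 + gaugeLogDeriv' b R k r - effectivePotential a b c β k r + E) *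
        f r = 0 :=
    (mul_eq_zero.mp (by linear_combination hode)).resolve_left hA
  show -(deriv (deriv fun y => gauge b c R k y * f y) r) +
    effectivePotential a b c β k r * (gauge b c R k r * f r) = E * (gauge b c R k r * f r)
  rw [hu''.deriv]
  linear_combination (-gauge b c R k r) * hreduced

theorem stmt_17 (b β R a c k E : ℝ) (hb : 0 < b) (hβ : 0 < β) (hR : 0 < R)
    (f : ℝ → ℝ) (hf : ContDiffOn ℝ 2 f (Set.Ioo 0 R))
    (hfODE : ∀ r ∈ Set.Ioo (0 : ℝ) R,
        (-4 * b ^ 2 * r ^ 3 + 4 * b ^ 2 * (R - β) * r ^ 2 + 4 * b ^ 2 * β * R * r) *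
            deriv (deriv f) r +
          (8 * b ^ 3 * r ^ 4 + 4 * b * (c + 2 * b ^ 2 * (β - R)) * r ^ 3 -
            4 * b * (b - β * c + b * k + 2 * b ^ 2 * β * R + c * R) * r ^ 2 -
            4 * b * (β * c * R + b * (β + β * k + R - k * R)) * r +
            4 * b ^ 2 * β * (k - 1) * R) * deriv f r +
          ((4 * b ^ 3 * (2 + k) - c ^ 2 - 4 * b ^ 2 * E) * r ^ 3 +
            (4 * a * b ^ 2 + 2 * b * c * (1 + k) + (c ^ 2 + 4 * b ^ 2 * E) * (R - β) +
              4 * b ^ 3 * (β * (k + 2) - k * R)) * r ^ 2 +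
            (2 * b * (β * c * (1 + k) - 2 * b * (k - 1)) +
              (β * (c ^ 2 + 4 * b ^ 2 * E) - 4 * a * b ^ 2 - 2 * b * c * (k - 1) -
                4 * b ^ 3 * β * k) * R) * r -
            2 * b * β * (k - 1) * (2 * b + c * R)) * f r = 0)
    (u : ℝ → ℝ)
    (hu : u = fun r : ℝ =>
      r ^ ((k - 1) / 2) * (R - r) * Real.exp (-(c / (2 * b)) * r - (b / 2) * r ^ 2) * f r) :
    (∀ r ∈ Set.Ioo (0 : ℝ) R,
        -(deriv (deriv u) r) +
          ((k - 1) * (k - 3) / (4 * r ^ 2) + a / (r + β) + c * r + b ^ 2 * r ^ 2) * u r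
          = E * u r) ∧ u R = 0 :=
  stmt_17_general b β R a c k E hb hβ f hf hfODE u hu
end

section
/- Let b > 0, β > 0, R > 0, a, c, k real satisfy the three conditions: 4ab² + 2bc(3+k) + (2abc + c²(3+k))R + 4b²cR² = 0; 2b(βc(3+k) − 4bk) + c(βc(3+k) − 4bk)R + (16b³ − 2abc + 4b²βc − c²(1+k))R² = 0; and 8b²βk + 4bβckR + (4ab² + β(c²(1+k) − 16b³))R² = 0. Then u(r) = r^{(k−1)/2}(R−r)(1 + (c/(2b) + 1/R) r) exp(−(c/(2b)) r − (b/2) r²) solves −u'' + [(k−1)(k−3)/(4r²) + a/(r+β) + c r + b² r²] u = E u on (0,R) with E = b(k+4) − c²/(4b²), and u(0) = u(R) = 0 (in the limit sense at 0 when k > 1). -/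
/-!
Write `u = r ^ s * v` with `s = (k - 1) / 2`. Then
`u'' = r ^ (s - 2) (s (s - 1) v + 2 s r v' + r² v'')`, and the `s (s - 1)` term cancels the
centrifugal term `(k - 1)(k - 3) / (4 r²)`. For `v = P e^q` with
`P = (R - r)(1 + (c / (2b) + 1 / R) r)` and `q = -(c / (2b)) r - (b / 2) r²`, every derivative
is again a polynomial times `e^q`, so the remaining radial equation becomes, after clearing
`r + β`, a polynomial identity in `r`: up to the factor `8b` it is `r h3 - r² h2 - r³ h1`.
Near `0` the factor `r ^ s` forces `u → 0` since `k > 1`, and `P(R) = 0`.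
-/

open Real Filter Topology Set Polynomial

theorem hasDerivAt_rpow_mul {s x d : ℝ} {f : ℝ → ℝ} (hx : 0 < x) (hf : HasDerivAt f d x) :
    HasDerivAt (fun y => y ^ s * f y) (x ^ (s - 1) * (s * f x + x * d)) x := by
  refine ((hasDerivAt_rpow_const (Or.inl hx.ne')).mul hf).congr_deriv ?_
  rw [rpow_sub_one hx.ne']
  field_simp

theorem deriv_deriv_rpow_mul_s18 {s x f'' : ℝ} {f f' : ℝ → ℝ} (hx : 0 < x)
    (hf : ∀ᶠ y in 𝓝 x, HasDerivAt f (f' y) y) (hf' : HasDerivAt f' f'' x) :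
    deriv (deriv fun y => y ^ s * f y) x =
      x ^ (s - 2) * (s * (s - 1) * f x + 2 * s * x * f' x + x ^ 2 * f'') := by
  have hu : deriv (fun y => y ^ s * f y) =ᶠ[𝓝 x] fun y => y ^ (s - 1) * (s * f y + y * f' y) := by
    filter_upwards [hf, Ioi_mem_nhds hx] with y hfy hy
    exact (hasDerivAt_rpow_mul hy hfy).deriv
  have hw : HasDerivAt (fun y => s * f y + y * f' y) (s * f' x + (1 * f' x + x * f'')) x :=
    (hf.self_of_nhds.const_mul s).add ((hasDerivAt_id x).mul hf')
  rw [hu.deriv_eq, (hasDerivAt_rpow_mul hx hw).deriv, show s - 1 - 1 = s - 2 by ring]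
  ring

noncomputable def Polynomial.expTwistedDerivative (p q : ℝ[X]) : ℝ[X] :=
  derivative p + p * derivative q

theorem Polynomial.hasDerivAt_eval_mul_exp_eval (p q : ℝ[X]) (x : ℝ) :
    HasDerivAt (fun y => p.eval y * exp (q.eval y))
      ((p.expTwistedDerivative q).eval x * exp (q.eval x)) x := by
  refine ((p.hasDerivAt x).mul (q.hasDerivAt x).exp).congr_deriv ?_
  simp only [expTwistedDerivative, eval_add, eval_mul]
  ring

theorem tendsto_rpow_mul_nhdsGT_zero {s : ℝ} {f : ℝ → ℝ} (hs : 0 < s) (hf : ContinuousAt f 0) :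
    Tendsto (fun y => y ^ s * f y) (𝓝[>] 0) (𝓝 0) := by
  have h := ((continuous_rpow_const hs.le).tendsto 0).mul hf
  rw [zero_rpow hs.ne', zero_mul] at h
  exact h.mono_left nhdsWithin_le_nhds

noncomputable def confinedFactor (b c R : ℝ) : ℝ[X] :=
  (C R - X) * (1 + C (c / (2 * b) + 1 / R) * X)

noncomputable def gaussianExponent (b c : ℝ) : ℝ[X] :=
  -(C (c / (2 * b)) * X) - C (b / 2) * X ^ 2

theorem radialEquation_confinedFactor {b β R a c k r : ℝ} (hb : b ≠ 0) (hR : R ≠ 0)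
    (hrβ : r + β ≠ 0)
    (h1 : 4 * a * b ^ 2 + 2 * b * c * (3 + k) + (2 * a * b * c + c ^ 2 * (3 + k)) * R +
        4 * b ^ 2 * c * R ^ 2 = 0)
    (h2 : 2 * b * (β * c * (3 + k) - 4 * b * k) + c * (β * c * (3 + k) - 4 * b * k) * R +
        (16 * b ^ 3 - 2 * a * b * c + 4 * b ^ 2 * β * c - c ^ 2 * (1 + k)) * R ^ 2 = 0)
    (h3 : 8 * b ^ 2 * β * k + 4 * b * β * c * k * R +
        (4 * a * b ^ 2 + β * (c ^ 2 * (1 + k) - 16 * b ^ 3)) * R ^ 2 = 0) :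
    -((k - 1) * ((confinedFactor b c R).expTwistedDerivative (gaussianExponent b c)).eval r +
        r * ((confinedFactor b c R).expTwistedDerivative (gaussianExponent b c)
          |>.expTwistedDerivative (gaussianExponent b c)).eval r) +
      r * (a / (r + β) + c * r + b ^ 2 * r ^ 2 - (b * (k + 4) - c ^ 2 / (4 * b ^ 2))) *
        (confinedFactor b c R).eval r = 0 := by
  simp only [expTwistedDerivative, confinedFactor, gaussianExponent, derivative_mul,
    derivative_sub, derivative_neg, derivative_C, derivative_X, derivative_one,
    derivative_X_pow_succ, map_add, map_one, Nat.cast_one, pow_one, eval_add, eval_sub, eval_neg,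
    eval_mul, eval_C, eval_X, eval_one, eval_zero, zero_mul, mul_zero, zero_add, add_zero, zero_sub]
  field_simp
  linear_combination (8 * b * r) * h3 - (8 * b * r ^ 2) * h2 - (8 * b * r ^ 3) * h1

theorem stmt_18 (b β R a c k E : ℝ) (hb : 0 < b) (hβ : 0 < β) (hR : 0 < R) (hk : 1 < k)
    (h1 : 4 * a * b ^ 2 + 2 * b * c * (3 + k) + (2 * a * b * c + c ^ 2 * (3 + k)) * R +
        4 * b ^ 2 * c * R ^ 2 = 0)
    (h2 : 2 * b * (β * c * (3 + k) - 4 * b * k) + c * (β * c * (3 + k) - 4 * b * k) * R +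
        (16 * b ^ 3 - 2 * a * b * c + 4 * b ^ 2 * β * c - c ^ 2 * (1 + k)) * R ^ 2 = 0)
    (h3 : 8 * b ^ 2 * β * k + 4 * b * β * c * k * R +
        (4 * a * b ^ 2 + β * (c ^ 2 * (1 + k) - 16 * b ^ 3)) * R ^ 2 = 0)
    (hE : E = b * (k + 4) - c ^ 2 / (4 * b ^ 2))
    (u : ℝ → ℝ)
    (hu : u = fun r : ℝ =>
      r ^ ((k - 1) / 2) * (R - r) * (1 + (c / (2 * b) + 1 / R) * r) *
        Real.exp (-(c / (2 * b)) * r - (b / 2) * r ^ 2)) :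
    (∀ r ∈ Set.Ioo (0 : ℝ) R,
        -(deriv (deriv u) r) +
          ((k - 1) * (k - 3) / (4 * r ^ 2) + a / (r + β) + c * r + b ^ 2 * r ^ 2) * u r
          = E * u r) ∧
    Filter.Tendsto u (nhdsWithin 0 (Set.Ioi 0)) (nhds 0) ∧ u R = 0 := by
  have hu_eval : u = fun y => y ^ ((k - 1) / 2) *
      ((confinedFactor b c R).eval y * exp ((gaussianExponent b c).eval y)) := by
    rw [hu]
    funext y
    simp only [confinedFactor, gaussianExponent, eval_mul, eval_sub, eval_add, eval_neg, eval_C,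
      eval_X, eval_one, eval_pow, neg_mul, mul_assoc]
  refine ⟨fun r hr => ?_, ?_, by simp [hu]⟩
  · have hr0 : 0 < r := hr.1
    have key := radialEquation_confinedFactor hb.ne' hR.ne' (by positivity : r + β ≠ 0) h1 h2 h3
    have hsplit : r ^ ((k - 1) / 2) = r ^ ((k - 1) / 2 - 2) * r ^ 2 := by
      rw [← rpow_natCast, ← rpow_add hr0]
      norm_num
    have hcentrifugal :
        (k - 1) * (k - 3) / (4 * r ^ 2) * r ^ 2 = (k - 1) / 2 * ((k - 1) / 2 - 1) := by
      field_simp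
      ring
    rw [hu_eval, deriv_deriv_rpow_mul_s18 hr0
      (.of_forall fun y => hasDerivAt_eval_mul_exp_eval _ _ y) (hasDerivAt_eval_mul_exp_eval _ _ r)]
    dsimp only
    rw [hsplit, hE]
    linear_combination (r ^ ((k - 1) / 2 - 2) * exp ((gaussianExponent b c).eval r)) *
      (r * key + (confinedFactor b c R).eval r * hcentrifugal)
  · rw [hu_eval]
    exact tendsto_rpow_mul_nhdsGT_zero (by linarith) (by fun_prop)
end
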